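/- Let U ⊆ V ⊆ R^d be submodules and ≺ a fixed monomial order on R^d. Then V has exactly one reduced Gröbner basis relative to U; in particular a reduced Gröbner basis of V relative to U exists and is independent of any choice of generators of U and V. -/

import Mathlib

attribute [local instance] Classical.propDecidable

noncomputable section

/-- Module monomial index: an exponent vector together with a component index. -/
abbrev ModMon (n d : ℕ) := (Fin n →₀ ℕ) × Fin d

/-- The free module `R^d` over `R = k[X_1, …, X_n]`. -/
abbrev FreeMod (k : Type*) [Field k] (n d : ℕ) := Fin d → MvPolynomial (Fin n) k

variable {k : Type*} [Field k] {n d : ℕ}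

/-- The module monomial `X^α e_i` as an element of `R^d`. -/
def mmVec (m : ModMon n d) : FreeMod k n d :=
  Pi.single m.2 (MvPolynomial.monomial m.1 (1 : k))

/-- The support of `f ∈ R^d` as a finite set of module monomials. -/
def suppF (f : FreeMod k n d) : Finset (ModMon n d) :=
  (Finset.univ : Finset (Fin d)).biUnion fun i =>
    ((f i).support.image fun a => ((a, i) : ModMon n d))

/-- A monomial order on `R^d`: a well-founded total order on module monomials such that
`e_i ⪯ X^α e_i` and which is compatible with multiplication by monomials. -/
structure ModMonOrder (n d : ℕ) where
  toOrd : LinearOrder (ModMon n d)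
  wf : WellFounded toOrd.lt
  base_le : ∀ (i : Fin d) (a : Fin n →₀ ℕ), toOrd.le (0, i) (a, i)
  add_le : ∀ (a b c : Fin n →₀ ℕ) (i j : Fin d),
    toOrd.le (b, i) (c, j) → toOrd.le (a + b, i) (a + c, j)

namespace ModMonOrder

variable (ord : ModMonOrder n d)

/-- The leading monomial of `f` (`⊥` if `f = 0`). -/
def lmo (f : FreeMod k n d) : WithBot (ModMon n d) :=
  letI := ord.toOrd
  (suppF f).max

/-- The order on leading monomials, extended to `WithBot` (with `⊥` smallest). -/
def leB (x y : WithBot (ModMon n d)) : Prop :=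
  WithBot.recBotCoe True
    (fun a => WithBot.recBotCoe False (fun b => ord.toOrd.le a b) y) x

/-- The leading coefficient of `f` (`0` if `f = 0`). -/
def lc (f : FreeMod k n d) : k :=
  WithBot.recBotCoe 0 (fun m => (f m.2).coeff m.1) (ord.lmo f)

/-- The leading monomial of `f`, as an element of `R^d` (`0` if `f = 0`). -/
def lmVec (f : FreeMod k n d) : FreeMod k n d :=
  WithBot.recBotCoe 0 (fun m => mmVec m) (ord.lmo f)

/-- `lm(W)`: the submodule generated by the leading monomials of nonzero elements of `W`. -/
def lmSub (W : Submodule (MvPolynomial (Fin n) k) (FreeMod k n d)) :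
    Submodule (MvPolynomial (Fin n) k) (FreeMod k n d) :=
  Submodule.span (MvPolynomial (Fin n) k) {v | ∃ f ∈ W, f ≠ 0 ∧ v = ord.lmVec f}

end ModMonOrder

/-- Divisibility in `R^d`: `u` divides `v` iff `v = p • u` for some polynomial `p`. -/
def dvdV (u v : FreeMod k n d) : Prop := ∃ p : MvPolynomial (Fin n) k, v = p • u

/-- `G` is a Gröbner basis of the submodule `W ⊆ R^d`. -/
def IsGB (ord : ModMonOrder n d) (W : Submodule (MvPolynomial (Fin n) k) (FreeMod k n d))
    (G : Finset (FreeMod k n d)) : Prop :=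
  Submodule.span (MvPolynomial (Fin n) k) (G : Set (FreeMod k n d)) = W ∧
  Submodule.span (MvPolynomial (Fin n) k) (ord.lmVec '' (G : Set (FreeMod k n d))) = ord.lmSub W

/-- `G` is the reduced Gröbner basis of `W ⊆ R^d`. -/
def IsRedGB (ord : ModMonOrder n d) (W : Submodule (MvPolynomial (Fin n) k) (FreeMod k n d))
    (G : Finset (FreeMod k n d)) : Prop :=
  IsGB ord W G ∧
  (∀ g ∈ G, ∀ g' ∈ G, g ≠ g' → ¬ dvdV (ord.lmVec g) (ord.lmVec g')) ∧
  ∀ g ∈ G, ord.lc g = 1 ∧ ∀ m ∈ suppF (g - ord.lmVec g), mmVec m ∉ ord.lmSub W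

/-- `p` is a normal form of `f` modulo `U`: `f - p ∈ U` and `p` is supported on
module monomials outside `lm(U)`. -/
def IsNF (ord : ModMonOrder n d) (U : Submodule (MvPolynomial (Fin n) k) (FreeMod k n d))
    (f p : FreeMod k n d) : Prop :=
  f - p ∈ U ∧ ∀ m ∈ suppF p, mmVec m ∉ ord.lmSub U

/-- `H` is a Gröbner basis of `V` relative to `U`. -/
def IsRelGB (ord : ModMonOrder n d) (U V : Submodule (MvPolynomial (Fin n) k) (FreeMod k n d))
    (H : Finset (FreeMod k n d)) : Prop :=
  (H : Set (FreeMod k n d)) ⊆ (V : Set (FreeMod k n d)) \ (U : Set (FreeMod k n d)) ∧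
  (∀ h ∈ H, ∀ m ∈ suppF h, mmVec m ∉ ord.lmSub U) ∧
  Submodule.span (MvPolynomial (Fin n) k) (ord.lmVec '' (H : Set (FreeMod k n d))) ⊔ ord.lmSub U
    = ord.lmSub V

/-- `H` is a minimal Gröbner basis of `V` relative to `U`. -/
def IsMinRelGB (ord : ModMonOrder n d) (U V : Submodule (MvPolynomial (Fin n) k) (FreeMod k n d))
    (H : Finset (FreeMod k n d)) : Prop :=
  IsRelGB ord U V H ∧
  ∀ h ∈ H, ∀ h' ∈ H, h ≠ h' → ¬ dvdV (ord.lmVec h) (ord.lmVec h')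

/-- `H` is the reduced Gröbner basis of `V` relative to `U`. -/
def IsRedRelGB (ord : ModMonOrder n d) (U V : Submodule (MvPolynomial (Fin n) k) (FreeMod k n d))
    (H : Finset (FreeMod k n d)) : Prop :=
  IsMinRelGB ord U V H ∧
  ∀ h ∈ H, ord.lc h = 1 ∧ ∀ m ∈ suppF (h - ord.lmVec h), mmVec m ∉ ord.lmSub V

end

/-!
The leading monomials of `V` that are minimal for divisibility and do not lie in `lm(U)` are
finitely many by Dickson's lemma, and they are exactly the leading monomials of any minimal
Gröbner basis of `V` relative to `U`. For each of them, an element of `V` with that leading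
monomial, normalised to leading coefficient `1` and with its tail replaced by a normal form
modulo `V`, is reduced; these elements form the reduced basis. Two reduced elements of `V` with
the same leading monomial coincide, since their difference lies in `V` but is supported outside
`lm(V)`; this gives uniqueness.
-/

open MvPolynomial

section FreeModule

variable {k : Type*} [Field k] {n d : ℕ}

local notation "R" => MvPolynomial (Fin n) k

@[simp]
theorem mem_suppF {f : FreeMod k n d} {m : ModMon n d} :
    m ∈ suppF f ↔ (f m.2).coeff m.1 ≠ 0 := by
  simp only [suppF, Finset.mem_biUnion, Finset.mem_univ, Finset.mem_image, mem_support_iff,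
    true_and]
  exact ⟨fun ⟨_, _, h, hm⟩ => hm ▸ h, fun h => ⟨_, _, h, rfl⟩⟩

theorem suppF_eq_empty_iff {f : FreeMod k n d} : suppF f = ∅ ↔ f = 0 := by
  refine ⟨fun h => ?_, fun h => ?_⟩
  · funext i
    ext a
    simpa using Finset.eq_empty_iff_forall_notMem.mp h (a, i)
  · subst h
    ext m
    simp

@[simp]
theorem suppF_zero : suppF (0 : FreeMod k n d) = ∅ :=
  suppF_eq_empty_iff.mpr rfl

theorem coeff_mmVec (m m' : ModMon n d) :
    ((mmVec m : FreeMod k n d) m'.2).coeff m'.1 = if m = m' then 1 else 0 := by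
  obtain ⟨a, i⟩ := m
  obtain ⟨a', i'⟩ := m'
  rcases eq_or_ne i i' with rfl | hi
  · simp [mmVec, coeff_monomial]
  · simp [mmVec, hi]

@[simp]
theorem suppF_mmVec (m : ModMon n d) : suppF (mmVec m : FreeMod k n d) = {m} := by
  ext m'
  simp [coeff_mmVec, eq_comm]

theorem suppF_add_subset (f g : FreeMod k n d) : suppF (f + g) ⊆ suppF f ∪ suppF g := by
  intro m
  contrapose!
  simp_all

theorem suppF_sub_subset (f g : FreeMod k n d) : suppF (f - g) ⊆ suppF f ∪ suppF g := by
  intro m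
  contrapose!
  simp_all

theorem suppF_subset_sub_union (f g : FreeMod k n d) : suppF f ⊆ suppF (f - g) ∪ suppF g := by
  simpa using suppF_add_subset (f - g) g

theorem coeff_C_smul (c : k) (f : FreeMod k n d) (m : ModMon n d) :
    (((C c : R) • f) m.2).coeff m.1 = c * (f m.2).coeff m.1 := by
  simp [coeff_C_mul]

theorem suppF_C_smul_subset (c : k) (f : FreeMod k n d) : suppF ((C c : R) • f) ⊆ suppF f := by
  intro m
  simp +contextual

theorem suppF_C_smul {c : k} (hc : c ≠ 0) (f : FreeMod k n d) :
    suppF ((C c : R) • f) = suppF f := by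
  ext m
  simp [hc]

theorem coeff_monomial_smul (a : Fin n →₀ ℕ) (f : FreeMod k n d) (m : ModMon n d) :
    (((monomial a 1 : R) • f) m.2).coeff m.1 =
      if a ≤ m.1 then (f m.2).coeff (m.1 - a) else 0 := by
  simp [coeff_monomial_mul']

def MonDvd (m m' : ModMon n d) : Prop := m.2 = m'.2 ∧ m.1 ≤ m'.1

theorem MonDvd.refl (m : ModMon n d) : MonDvd m m := ⟨rfl, le_rfl⟩

theorem MonDvd.trans {m₁ m₂ m₃ : ModMon n d} (h₁₂ : MonDvd m₁ m₂) (h₂₃ : MonDvd m₂ m₃) :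
    MonDvd m₁ m₃ :=
  ⟨h₁₂.1.trans h₂₃.1, h₁₂.2.trans h₂₃.2⟩

theorem MonDvd.antisymm {m m' : ModMon n d} (h : MonDvd m m') (h' : MonDvd m' m) : m = m' :=
  Prod.ext (le_antisymm h.2 h'.2) h.1

theorem exists_monDvd_of_mem_suppF_smul (p : R) (f : FreeMod k n d) {m' : ModMon n d}
    (hm' : m' ∈ suppF (p • f)) : ∃ m ∈ suppF f, MonDvd m m' := by
  have hmul : m'.1 ∈ (p * f m'.2).support := by simpa [mem_support_iff] using hm'
  obtain ⟨a, -, b, hb, hab⟩ := Finset.mem_add.mp (support_mul p (f m'.2) hmul)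
  exact ⟨(b, m'.2), by simpa [mem_support_iff] using hb, rfl, hab ▸ le_add_self⟩

theorem monomial_smul_mmVec (a : Fin n →₀ ℕ) (m : ModMon n d) :
    (monomial a 1 : R) • (mmVec m : FreeMod k n d) = mmVec (a + m.1, m.2) := by
  simp [mmVec, ← Pi.single_smul, monomial_mul]

theorem dvdV_mmVec_iff {m m' : ModMon n d} :
    dvdV (mmVec m : FreeMod k n d) (mmVec m') ↔ MonDvd m m' := by
  constructor
  · rintro ⟨p, hp⟩
    have hm' : m' ∈ suppF (p • (mmVec m : FreeMod k n d)) := by simp [← hp]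
    obtain ⟨m₀, hm₀, hdvd⟩ := exists_monDvd_of_mem_suppF_smul p _ hm'
    rwa [suppF_mmVec, Finset.mem_singleton.mp hm₀] at *
  · rintro ⟨hi, ha⟩
    refine ⟨monomial (m'.1 - m.1) 1, ?_⟩
    rw [monomial_smul_mmVec, tsub_add_cancel_of_le ha, hi]

theorem exists_monDvd_of_mem_span {S : Set (ModMon n d)} {v : FreeMod k n d}
    (hv : v ∈ Submodule.span R (mmVec '' S)) : ∀ m' ∈ suppF v, ∃ m ∈ S, MonDvd m m' := by
  induction hv using Submodule.span_induction with
  | mem x hx =>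
    obtain ⟨m, hm, rfl⟩ := hx
    intro m' hm'
    rw [suppF_mmVec, Finset.mem_singleton] at hm'
    exact ⟨m, hm, hm' ▸ MonDvd.refl m⟩
  | zero => simp
  | add x y _ _ hx hy =>
    intro m' hm'
    rcases Finset.mem_union.mp (suppF_add_subset x y hm') with h | h
    exacts [hx m' h, hy m' h]
  | smul p x _ hx =>
    intro m' hm'
    obtain ⟨m₀, hm₀, hdvd₀⟩ := exists_monDvd_of_mem_suppF_smul p x hm'
    obtain ⟨m, hm, hdvd⟩ := hx m₀ hm₀
    exact ⟨m, hm, hdvd.trans hdvd₀⟩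

theorem mmVec_mem_span_iff {S : Set (ModMon n d)} {m' : ModMon n d} :
    (mmVec m' : FreeMod k n d) ∈ Submodule.span R (mmVec '' S) ↔ ∃ m ∈ S, MonDvd m m' := by
  refine ⟨fun h => exists_monDvd_of_mem_span h m' (by simp), ?_⟩
  rintro ⟨m, hm, hdvd⟩
  obtain ⟨p, hp⟩ := (dvdV_mmVec_iff (k := k)).mpr hdvd
  exact hp ▸ Submodule.smul_mem _ p (Submodule.subset_span ⟨m, hm, rfl⟩)

theorem exists_minimal_monDvd {S : Set (ModMon n d)} {m : ModMon n d} (hm : m ∈ S) :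
    ∃ m₀ ∈ S, MonDvd m₀ m ∧ ∀ m₁ ∈ S, MonDvd m₁ m₀ → m₁ = m₀ := by
  obtain ⟨a₀, ⟨ha₀S, ha₀m⟩, hmin⟩ := WellFounded.has_min wellFounded_lt
    {a : Fin n →₀ ℕ | (a, m.2) ∈ S ∧ a ≤ m.1} ⟨m.1, hm, le_rfl⟩
  refine ⟨(a₀, m.2), ha₀S, ⟨rfl, ha₀m⟩, ?_⟩
  rintro ⟨a₁, i⟩ h₁S ⟨rfl, ha₁ : a₁ ≤ a₀⟩
  rw [eq_of_le_of_not_lt ha₁ (hmin a₁ ⟨h₁S, ha₁.trans ha₀m⟩)]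

theorem finite_minimal_monDvd (S : Set (ModMon n d)) :
    {m ∈ S | ∀ m₁ ∈ S, MonDvd m₁ m → m₁ = m}.Finite := by
  set T := {m ∈ S | ∀ m₁ ∈ S, MonDvd m₁ m → m₁ = m}
  have hT : T ⊆ ⋃ i : Fin d, (·, i) '' {a | (a, i) ∈ T} := by
    rintro ⟨a, i⟩ hm
    exact Set.mem_iUnion.mpr ⟨i, a, hm, rfl⟩
  refine (Set.finite_iUnion fun i => Set.Finite.image _ ?_).subset hT
  have hanti : IsAntichain (· ≤ ·) {a | (a, i) ∈ T} := by
    intro a ha b hb hne hle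
    exact hne (congrArg Prod.fst (hb.2 (a, i) ha.1 ⟨rfl, hle⟩))
  exact hanti.finite_of_partiallyWellOrderedOn (Set.isPWO_of_wellQuasiOrderedLE _)

end FreeModule

namespace ModMonOrder

variable {k : Type*} [Field k] {n d : ℕ} (ord : ModMonOrder n d)

local notation "R" => MvPolynomial (Fin n) k

theorem lmo_eq_bot_iff {f : FreeMod k n d} : ord.lmo f = ⊥ ↔ f = 0 := by
  let := ord.toOrd
  rw [lmo, Finset.max_eq_bot, suppF_eq_empty_iff]

-- `ModMon n d` is a product type and carries the product order, not the monomial order; this is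
-- why `ord.toOrd` is always named explicitly.
theorem lmo_eq_coe_iff {f : FreeMod k n d} {m : ModMon n d} :
    ord.lmo f = m ↔ m ∈ suppF f ∧ ∀ m' ∈ suppF f, ord.toOrd.le m' m := by
  let := ord.toOrd
  refine ⟨fun h => ⟨Finset.mem_of_max h, fun m' hm' => Finset.le_max_of_eq hm' h⟩,
    fun ⟨hm, hle⟩ => ?_⟩
  obtain ⟨b, hb⟩ := Finset.max_of_mem hm
  rw [lmo, hb,
    ord.toOrd.le_antisymm _ _ (hle b (Finset.mem_of_max hb)) (Finset.le_max_of_eq hm hb)]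

theorem exists_lmo_eq {f : FreeMod k n d} (hf : f ≠ 0) : ∃ m : ModMon n d, ord.lmo f = m := by
  cases h : ord.lmo f with
  | bot => exact absurd (ord.lmo_eq_bot_iff.mp h) hf
  | coe m => exact ⟨m, rfl⟩

theorem ne_zero_of_lmo_eq {f : FreeMod k n d} {m : ModMon n d} (h : ord.lmo f = m) : f ≠ 0 :=
  fun hf => WithBot.coe_ne_bot (h ▸ ord.lmo_eq_bot_iff.mpr hf)

theorem lc_eq_of_lmo_eq {f : FreeMod k n d} {m : ModMon n d} (h : ord.lmo f = m) :
    ord.lc f = (f m.2).coeff m.1 := by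
  rw [lc, h]
  rfl

@[simp]
theorem lc_zero : ord.lc (0 : FreeMod k n d) = 0 := by
  rw [lc, ord.lmo_eq_bot_iff.mpr rfl]
  rfl

theorem lmVec_eq_of_lmo_eq {f : FreeMod k n d} {m : ModMon n d} (h : ord.lmo f = m) :
    ord.lmVec f = mmVec m := by
  rw [lmVec, h]
  rfl

theorem lmo_C_smul {c : k} (hc : c ≠ 0) (f : FreeMod k n d) :
    ord.lmo ((C c : R) • f) = ord.lmo f := by
  rw [lmo, lmo, suppF_C_smul hc]

theorem lmo_monomial_smul (a : Fin n →₀ ℕ) {f : FreeMod k n d} {m : ModMon n d}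
    (h : ord.lmo f = m) : ord.lmo ((monomial a 1 : R) • f) = ((a + m.1, m.2) : ModMon n d) := by
  obtain ⟨hm, hle⟩ := ord.lmo_eq_coe_iff.mp h
  refine ord.lmo_eq_coe_iff.mpr ⟨by simpa [coeff_monomial_smul] using hm, ?_⟩
  rintro ⟨b, i⟩ hb
  rw [mem_suppF, coeff_monomial_smul] at hb
  have hab : a ≤ b := by by_contra hab; simp [hab] at hb
  have hbi : ((b - a, i) : ModMon n d) ∈ suppF f := by simpa [hab] using hb
  simpa [add_tsub_cancel_of_le hab] using ord.add_le a (b - a) m.1 i m.2 (hle _ hbi)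

theorem lt_of_mem_suppF_sub {f g : FreeMod k n d} {m : ModMon n d}
    (hf : ∀ m' ∈ suppF f, ord.toOrd.le m' m) (hg : ∀ m' ∈ suppF g, ord.toOrd.le m' m)
    (hfg : (f m.2).coeff m.1 = (g m.2).coeff m.1) :
    ∀ m' ∈ suppF (f - g), ord.toOrd.lt m' m := by
  intro m' hm'
  have hne : m' ≠ m := by rintro rfl; simp [hfg] at hm'
  rcases Finset.mem_union.mp (suppF_sub_subset f g hm') with h | h
  exacts [@lt_of_le_of_ne _ ord.toOrd.toPartialOrder _ _ (hf m' h) hne,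
    @lt_of_le_of_ne _ ord.toOrd.toPartialOrder _ _ (hg m' h) hne]

def lmSet (s : Set (FreeMod k n d)) : Set (ModMon n d) := {m | ∃ f ∈ s, ord.lmo f = m}

variable {ord}

theorem lmSet_mono {s t : Set (FreeMod k n d)} (hst : s ⊆ t) : ord.lmSet s ⊆ ord.lmSet t :=
  fun _ ⟨f, hf, hm⟩ => ⟨f, hst hf, hm⟩

theorem mem_lmSet_of_monDvd {W : Submodule R (FreeMod k n d)} {m m' : ModMon n d}
    (hm : m ∈ ord.lmSet (W : Set (FreeMod k n d))) (hdvd : MonDvd m m') :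
    m' ∈ ord.lmSet (W : Set (FreeMod k n d)) := by
  obtain ⟨f, hf, hfm⟩ := hm
  refine ⟨(monomial (m'.1 - m.1) 1 : R) • f, W.smul_mem _ hf, ?_⟩
  rw [ord.lmo_monomial_smul _ hfm, tsub_add_cancel_of_le hdvd.2, hdvd.1]

theorem lmVec_image_eq {s : Set (FreeMod k n d)} (hs : 0 ∉ s) :
    ord.lmVec '' s = mmVec '' ord.lmSet s := by
  ext v
  constructor
  · rintro ⟨f, hf, rfl⟩
    obtain ⟨m, hm⟩ := ord.exists_lmo_eq (ne_of_mem_of_not_mem hf hs)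
    exact ⟨m, ⟨f, hf, hm⟩, (ord.lmVec_eq_of_lmo_eq hm).symm⟩
  · rintro ⟨m, ⟨f, hf, hm⟩, rfl⟩
    exact ⟨f, hf, ord.lmVec_eq_of_lmo_eq hm⟩

theorem lmSub_eq_span (W : Submodule R (FreeMod k n d)) :
    ord.lmSub W = Submodule.span R (mmVec '' ord.lmSet (W : Set (FreeMod k n d))) := by
  have hlm : ord.lmSet ((W : Set (FreeMod k n d)) \ {0}) = ord.lmSet (W : Set (FreeMod k n d)) :=
    (ord.lmSet_mono Set.sdiff_subset).antisymm
      fun m ⟨f, hf, hm⟩ => ⟨f, ⟨hf, ord.ne_zero_of_lmo_eq hm⟩, hm⟩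
  rw [lmSub, ← hlm, ← lmVec_image_eq (by simp)]
  congr 1
  ext v
  simp [eq_comm, and_assoc]

theorem mmVec_mem_lmSub_iff {W : Submodule R (FreeMod k n d)} {m : ModMon n d} :
    (mmVec m : FreeMod k n d) ∈ ord.lmSub W ↔ m ∈ ord.lmSet (W : Set (FreeMod k n d)) := by
  rw [lmSub_eq_span, mmVec_mem_span_iff]
  exact ⟨fun ⟨_, hm₀, hdvd⟩ => mem_lmSet_of_monDvd hm₀ hdvd, fun hm => ⟨m, hm, MonDvd.refl m⟩⟩

theorem lmSub_mono {U V : Submodule R (FreeMod k n d)} (hUV : U ≤ V) :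
    ord.lmSub U ≤ ord.lmSub V := by
  rw [lmSub_eq_span, lmSub_eq_span]
  exact Submodule.span_mono (Set.image_mono (lmSet_mono hUV))

theorem exists_monic_of_mem_lmSet {W : Submodule R (FreeMod k n d)} {m : ModMon n d}
    (hm : m ∈ ord.lmSet (W : Set (FreeMod k n d))) :
    ∃ g ∈ W, ord.lmo g = m ∧ (g m.2).coeff m.1 = 1 := by
  obtain ⟨f, hf, hfm⟩ := hm
  have hc : (f m.2).coeff m.1 ≠ 0 := mem_suppF.mp (ord.lmo_eq_coe_iff.mp hfm).1
  refine ⟨(C ((f m.2).coeff m.1)⁻¹ : R) • f, W.smul_mem _ hf, ?_, ?_⟩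
  · rwa [ord.lmo_C_smul (inv_ne_zero hc)]
  · rw [coeff_C_smul, inv_mul_cancel₀ hc]

theorem exists_isNF_of_lt (V : Submodule R (FreeMod k n d)) (b : ModMon n d) :
    ∀ f : FreeMod k n d, (∀ m ∈ suppF f, ord.toOrd.lt m b) →
      ∃ r, IsNF ord V f r ∧ ∀ m ∈ suppF r, ord.toOrd.lt m b := by
  induction b using ord.wf.induction with
  | _ b ih =>
  intro f hf
  rcases eq_or_ne f 0 with rfl | hf0
  · exact ⟨0, ⟨by simp, by simp⟩, by simp⟩
  obtain ⟨m, hfm⟩ := ord.exists_lmo_eq hf0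
  obtain ⟨hm, hle⟩ := ord.lmo_eq_coe_iff.mp hfm
  have hmb : ord.toOrd.lt m b := hf m hm
  have lt_b : ∀ r : FreeMod k n d, (∀ m' ∈ suppF r, ord.toOrd.lt m' m) →
      ∀ m' ∈ suppF r, ord.toOrd.lt m' b :=
    fun r hr m' hm' => @lt_trans _ ord.toOrd.toPreorder _ _ _ (hr m' hm') hmb
  set c := (f m.2).coeff m.1
  by_cases hmV : m ∈ ord.lmSet (V : Set (FreeMod k n d))
  · obtain ⟨g, hgV, hgm, hg1⟩ := exists_monic_of_mem_lmSet hmV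
    have hlt := ord.lt_of_mem_suppF_sub hle
      (fun m' hm' => (ord.lmo_eq_coe_iff.mp hgm).2 m' (suppF_C_smul_subset c g hm'))
      (by rw [coeff_C_smul, hg1, mul_one])
    obtain ⟨r, ⟨hr, hrV⟩, hrm⟩ := ih m hmb _ hlt
    refine ⟨r, ⟨?_, hrV⟩, lt_b r hrm⟩
    simpa [sub_right_comm f] using V.add_mem hr (V.smul_mem (C c) hgV)
  · have hmm : ∀ m' ∈ suppF ((C c : R) • (mmVec m : FreeMod k n d)), m' = m := fun m' hm' =>
      Finset.mem_singleton.mp (suppF_mmVec (k := k) m ▸ suppF_C_smul_subset c _ hm')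
    have hlt := ord.lt_of_mem_suppF_sub hle (fun m' hm' => hmm m' hm' ▸ ord.toOrd.le_refl m)
      (by rw [coeff_C_smul, coeff_mmVec, if_pos rfl, mul_one])
    obtain ⟨r, ⟨hr, hrV⟩, hrm⟩ := ih m hmb _ hlt
    have hsupp : ∀ m' ∈ suppF ((C c : R) • mmVec m + r), m' = m ∨ m' ∈ suppF r := fun m' hm' =>
      (Finset.mem_union.mp (suppF_add_subset _ _ hm')).imp_left (hmm m')
    refine ⟨(C c : R) • mmVec m + r, ⟨by rwa [← sub_sub], fun m' hm' => ?_⟩, fun m' hm' => ?_⟩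
    · rcases hsupp m' hm' with rfl | h
      exacts [mmVec_mem_lmSub_iff.not.mpr hmV, hrV m' h]
    · rcases hsupp m' hm' with rfl | h
      exacts [hmb, lt_b r hrm m' h]

variable (ord) in
def IsReduced (V : Submodule R (FreeMod k n d)) (h : FreeMod k n d) : Prop :=
  ∀ m ∈ suppF (h - ord.lmVec h), mmVec m ∉ ord.lmSub V

theorem exists_lc_eq_one_isReduced {V : Submodule R (FreeMod k n d)} {m : ModMon n d}
    (hm : m ∈ ord.lmSet (V : Set (FreeMod k n d))) :
    ∃ h ∈ V, ord.lmo h = m ∧ ord.lc h = 1 ∧ ord.IsReduced V h := by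
  obtain ⟨g, hgV, hgm, hg1⟩ := exists_monic_of_mem_lmSet hm
  have hlt := ord.lt_of_mem_suppF_sub (ord.lmo_eq_coe_iff.mp hgm).2
    (fun m' hm' => by
      rw [suppF_mmVec, Finset.mem_singleton] at hm'
      exact hm' ▸ ord.toOrd.le_refl m)
    (by simp [hg1, coeff_mmVec])
  obtain ⟨r, ⟨hr, hrV⟩, hrm⟩ := exists_isNF_of_lt V m _ hlt
  have hrm' : (r m.2).coeff m.1 = 0 := by
    by_contra hne
    exact @lt_irrefl _ ord.toOrd.toPreorder m (hrm m (mem_suppF.mpr hne))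
  have hlm : ord.lmo (mmVec m + r) = m := by
    refine ord.lmo_eq_coe_iff.mpr ⟨by simp [coeff_mmVec, hrm'], fun m' hm' => ?_⟩
    rcases Finset.mem_union.mp (suppF_add_subset _ _ hm') with h | h
    · rw [suppF_mmVec, Finset.mem_singleton] at h
      exact h ▸ ord.toOrd.le_refl m
    · exact @le_of_lt _ ord.toOrd.toPreorder _ _ (hrm m' h)
  refine ⟨mmVec m + r, ?_, hlm, ?_, ?_⟩
  · rw [show mmVec m + r = g - (g - mmVec m - r) by abel]
    exact V.sub_mem hgV hr
  · simp [ord.lc_eq_of_lmo_eq hlm, coeff_mmVec, hrm']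
  · rwa [IsReduced, ord.lmVec_eq_of_lmo_eq hlm, add_sub_cancel_left]

/-- `h - h'` lies in `V` but is supported on the two tails, which avoid `lm(V)`. -/
theorem eq_of_isReduced {V : Submodule R (FreeMod k n d)} {h h' : FreeMod k n d}
    (hV : h ∈ V) (hV' : h' ∈ V) (hr : ord.IsReduced V h) (hr' : ord.IsReduced V h')
    (hlm : ord.lmVec h = ord.lmVec h') : h = h' := by
  by_contra hne
  obtain ⟨m, hm⟩ := ord.exists_lmo_eq (sub_ne_zero.mpr hne)
  have hmV : mmVec m ∈ ord.lmSub V := mmVec_mem_lmSub_iff.mpr ⟨h - h', V.sub_mem hV hV', hm⟩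
  have hsub : h - h' = (h - ord.lmVec h) - (h' - ord.lmVec h') := by
    rw [hlm, sub_sub_sub_cancel_right]
  have hm' := hsub ▸ (ord.lmo_eq_coe_iff.mp hm).1
  rcases Finset.mem_union.mp (suppF_sub_subset _ _ hm') with hm | hm
  exacts [hr m hm hmV, hr' m hm hmV]

variable (ord) in
def relMinLm (U V : Submodule R (FreeMod k n d)) : Set (ModMon n d) :=
  {m ∈ ord.lmSet (V : Set (FreeMod k n d)) | m ∉ ord.lmSet (U : Set (FreeMod k n d)) ∧
    ∀ m₁ ∈ ord.lmSet (V : Set (FreeMod k n d)), MonDvd m₁ m → m₁ = m}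

variable (ord) in
theorem relMinLm_finite (U V : Submodule R (FreeMod k n d)) : (ord.relMinLm U V).Finite :=
  (finite_minimal_monDvd _).subset fun _ ⟨hV, _, hmin⟩ => ⟨hV, hmin⟩

end ModMonOrder

section RelativeGroebnerBasis

variable {k : Type*} [Field k] {n d : ℕ} {ord : ModMonOrder n d}
  {U V : Submodule (MvPolynomial (Fin n) k) (FreeMod k n d)} {H H' : Finset (FreeMod k n d)}

open ModMonOrder

theorem IsRelGB.zero_notMem (hH : IsRelGB ord U V H) : (0 : FreeMod k n d) ∉ H :=
  fun h0 => (hH.1 h0).2 U.zero_mem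

theorem IsRelGB.exists_monDvd (hH : IsRelGB ord U V H) {m : ModMon n d}
    (hm : m ∈ ord.lmSet (V : Set (FreeMod k n d))) :
    ∃ m₀ ∈ ord.lmSet (H : Set (FreeMod k n d)) ∪ ord.lmSet (U : Set (FreeMod k n d)),
      MonDvd m₀ m := by
  rw [← mmVec_mem_span_iff (k := k), Set.image_union, Submodule.span_union,
    ← lmVec_image_eq hH.zero_notMem, ← lmSub_eq_span, hH.2.2, mmVec_mem_lmSub_iff]
  exact hm

theorem IsMinRelGB.eq_of_monDvd (hH : IsMinRelGB ord U V H) {m m' : ModMon n d}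
    (hm : m ∈ ord.lmSet (H : Set (FreeMod k n d)))
    (hm' : m' ∈ ord.lmSet (H : Set (FreeMod k n d))) (hdvd : MonDvd m m') : m = m' := by
  obtain ⟨h, hh, hhm⟩ := hm
  obtain ⟨h', hh', hhm'⟩ := hm'
  by_cases hne : h = h'
  · exact WithBot.coe_injective (hhm.symm.trans (hne ▸ hhm'))
  refine absurd ?_ (hH.2 h hh h' hh' hne)
  rwa [ord.lmVec_eq_of_lmo_eq hhm, ord.lmVec_eq_of_lmo_eq hhm', dvdV_mmVec_iff]

theorem IsMinRelGB.lmSet_eq (hH : IsMinRelGB ord U V H) :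
    ord.lmSet (H : Set (FreeMod k n d)) = ord.relMinLm U V := by
  have hHV : ord.lmSet (H : Set (FreeMod k n d)) ⊆ ord.lmSet (V : Set (FreeMod k n d)) :=
    lmSet_mono fun _ hh => (hH.1.1 hh).1
  have hHU : ∀ m ∈ ord.lmSet (H : Set (FreeMod k n d)),
      m ∉ ord.lmSet (U : Set (FreeMod k n d)) := fun m ⟨h, hh, hm⟩ hU =>
    hH.1.2.1 h hh m (ord.lmo_eq_coe_iff.mp hm).1 (mmVec_mem_lmSub_iff.mpr hU)
  ext m
  refine ⟨fun hm => ⟨hHV hm, hHU m hm, fun m₁ hm₁ hdvd => ?_⟩, fun ⟨hmV, hmU, hmin⟩ => ?_⟩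
  · obtain ⟨m₀, hm₀ | hm₀, hdvd₀⟩ := hH.1.exists_monDvd hm₁
    · exact hdvd.antisymm (hH.eq_of_monDvd hm₀ hm (hdvd₀.trans hdvd) ▸ hdvd₀)
    · exact absurd (mem_lmSet_of_monDvd hm₀ (hdvd₀.trans hdvd)) (hHU m hm)
  · obtain ⟨m₀, hm₀ | hm₀, hdvd₀⟩ := hH.1.exists_monDvd hmV
    · rwa [← hmin m₀ (hHV hm₀) hdvd₀]
    · exact absurd (mem_lmSet_of_monDvd hm₀ hdvd₀) hmU

theorem span_relMinLm_sup_lmSub (hUV : U ≤ V) :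
    Submodule.span _ (mmVec '' ord.relMinLm U V) ⊔ ord.lmSub U = ord.lmSub V := by
  have hLUV := lmSet_mono (ord := ord) (show (U : Set (FreeMod k n d)) ⊆ V from hUV)
  rw [lmSub_eq_span, lmSub_eq_span, ← Submodule.span_union, ← Set.image_union]
  refine le_antisymm
    (Submodule.span_mono (Set.image_mono (Set.union_subset (fun m hm => hm.1) hLUV)))
    (Submodule.span_le.mpr ?_)
  rintro _ ⟨m, hm, rfl⟩
  obtain ⟨m₀, hm₀, hdvd, hmin⟩ := exists_minimal_monDvd hm
  rw [SetLike.mem_coe, mmVec_mem_span_iff]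
  by_cases hU : m₀ ∈ ord.lmSet (U : Set (FreeMod k n d))
  · exact ⟨m, Or.inr (mem_lmSet_of_monDvd hU hdvd), MonDvd.refl m⟩
  · exact ⟨m₀, Or.inl ⟨hm₀, hU, hmin⟩, hdvd⟩

theorem isRedRelGB_of_lmSet_eq (hUV : U ≤ V) (hHV : ∀ h ∈ H, h ∈ V)
    (hlc : ∀ h ∈ H, ord.lc h = 1) (hred : ∀ h ∈ H, ord.IsReduced V h)
    (hlm : ord.lmSet (H : Set (FreeMod k n d)) = ord.relMinLm U V) : IsRedRelGB ord U V H := by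
  have h0 : (0 : FreeMod k n d) ∉ H := fun h0 => by simpa using hlc 0 h0
  have hlmo : ∀ h ∈ H, ∃ m ∈ ord.relMinLm U V, ord.lmo h = m := fun h hh => by
    obtain ⟨m, hm⟩ := ord.exists_lmo_eq (ne_of_mem_of_not_mem hh h0)
    exact ⟨m, hlm ▸ ⟨h, hh, hm⟩, hm⟩
  refine ⟨⟨⟨fun h hh => ?_, fun h hh m' hm' hU => ?_, ?_⟩, fun h hh h' hh' hne hdvd => ?_⟩,
    fun h hh => ⟨hlc h hh, hred h hh⟩⟩
  · obtain ⟨m, hm, hhm⟩ := hlmo h hh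
    exact ⟨hHV h hh, fun hU => hm.2.1 ⟨h, hU, hhm⟩⟩
  · obtain ⟨m, hm, hhm⟩ := hlmo h hh
    rcases Finset.mem_union.mp (suppF_subset_sub_union h (ord.lmVec h) hm') with ht | hl
    · exact hred h hh m' ht (lmSub_mono hUV hU)
    · rw [ord.lmVec_eq_of_lmo_eq hhm, suppF_mmVec, Finset.mem_singleton] at hl
      exact hm.2.1 (mmVec_mem_lmSub_iff.mp (hl ▸ hU))
  · rw [lmVec_image_eq (Finset.mem_coe.not.mpr h0), hlm, span_relMinLm_sup_lmSub hUV]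
  · obtain ⟨m, hm, hhm⟩ := hlmo h hh
    obtain ⟨m', hm', hhm'⟩ := hlmo h' hh'
    rw [ord.lmVec_eq_of_lmo_eq hhm, ord.lmVec_eq_of_lmo_eq hhm', dvdV_mmVec_iff] at hdvd
    refine hne (eq_of_isReduced (hHV h hh) (hHV h' hh') (hred h hh) (hred h' hh') ?_)
    rw [ord.lmVec_eq_of_lmo_eq hhm, ord.lmVec_eq_of_lmo_eq hhm', hm'.2.2 m hm.1 hdvd]

theorem exists_isRedRelGB (hUV : U ≤ V) : ∃ H, IsRedRelGB ord U V H := by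
  choose! F hFV hFm hFlc hFred using
    fun m (hm : m ∈ ord.relMinLm U V) => exists_lc_eq_one_isReduced hm.1
  refine ⟨(ord.relMinLm_finite U V).toFinset.image F, isRedRelGB_of_lmSet_eq hUV ?_ ?_ ?_ ?_⟩
  · simpa only [Finset.forall_mem_image, Set.Finite.mem_toFinset] using hFV
  · simpa only [Finset.forall_mem_image, Set.Finite.mem_toFinset] using hFlc
  · simpa only [Finset.forall_mem_image, Set.Finite.mem_toFinset] using hFred
  · ext m
    simp only [lmSet, Finset.coe_image, Set.Finite.coe_toFinset, Set.mem_image,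
      Set.mem_ofPred_eq]
    constructor
    · rintro ⟨_, ⟨m₀, hm₀, rfl⟩, hm⟩
      rwa [← WithBot.coe_injective ((hFm m₀ hm₀).symm.trans hm)]
    · exact fun hm => ⟨F m, ⟨m, hm, rfl⟩, hFm m hm⟩

theorem IsRedRelGB.subset (hH : IsRedRelGB ord U V H) (hH' : IsRedRelGB ord U V H') :
    H ⊆ H' := by
  intro h hh
  obtain ⟨m, hm⟩ := ord.exists_lmo_eq (ne_of_mem_of_not_mem hh hH.1.1.zero_notMem)
  obtain ⟨h', hh', hm'⟩ : m ∈ ord.lmSet (H' : Set (FreeMod k n d)) := by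
    rw [hH'.1.lmSet_eq, ← hH.1.lmSet_eq]
    exact ⟨h, hh, hm⟩
  rwa [eq_of_isReduced (hH.1.1.1 hh).1 (hH'.1.1.1 hh').1 (hH.2 h hh).2 (hH'.2 h' hh').2
    (by rw [ord.lmVec_eq_of_lmo_eq hm, ord.lmVec_eq_of_lmo_eq hm'])]

end RelativeGroebnerBasis

/-- **Relative Buchberger's theorem.** Let `U ⊆ V ⊆ R^d` be submodules and `≺` a fixed
monomial order on `R^d`. Then `V` has exactly one reduced Gröbner basis relative to `U`. -/
theorem unique_reduced_relative_groebner_basis {k : Type*} [Field k] {n d : ℕ}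
    (ord : ModMonOrder n d)
    (U V : Submodule (MvPolynomial (Fin n) k) (FreeMod k n d))
    (hUV : U ≤ V) :
    ∃! H : Finset (FreeMod k n d), IsRedRelGB ord U V H := by
  obtain ⟨H, hH⟩ := exists_isRedRelGB hUV
  exact ⟨H, hH, fun H' hH' => (hH'.subset hH).antisymm (hH.subset hH')⟩
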